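/- Let p: ℝ → ℝ be smooth and 2π-periodic, γ(α) := p'(α)e_α − p(α)Je_α, and L₁₂(α₁,α₂) := ω(γ'(α₁),γ'(α₂)). Then 2 ∫∫_{[0,2π]²} L₁₂(α₁,α₂)² dα₁ dα₂ = (∫₀^{2π} (p''+p)² dα)² − (∫₀^{2π} (p''+p)² cos(2α) dα)² − (∫₀^{2π} (p''+p)² sin(2α) dα)². -/

import Mathlib

open Real MeasureTheory intervalIntegral

/-- The standard area form on ℝ². -/
noncomputable def om (u v : ℝ × ℝ) : ℝ := u.1 * v.2 - v.1 * u.2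

/-- The unit vector forming angle α with (0,1). -/
noncomputable def eVec (α : ℝ) : ℝ × ℝ := (-Real.sin α, Real.cos α)

/-- Rotation by π/2 in the positive sense. -/
def Jrot (v : ℝ × ℝ) : ℝ × ℝ := (-v.2, v.1)

lemma aux_integral (q : ℝ → ℝ) (hq : Continuous q) (γ : ℝ → ℝ × ℝ)
    (hder : ∀ α, deriv γ α = (-(q α * Real.sin α), q α * Real.cos α)) :
    2 * ∫ α₁ in (0:ℝ)..(2 * π), ∫ α₂ in (0:ℝ)..(2 * π),
        (om (deriv γ α₁) (deriv γ α₂)) ^ 2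
      = (∫ α in (0:ℝ)..(2 * π), q α ^ 2) ^ 2
        - (∫ α in (0:ℝ)..(2 * π), q α ^ 2 * Real.cos (2 * α)) ^ 2
        - (∫ α in (0:ℝ)..(2 * π), q α ^ 2 * Real.sin (2 * α)) ^ 2 := by
  set A := ∫ α in (0:ℝ)..(2 * π), q α ^ 2 with hA
  set B := ∫ α in (0:ℝ)..(2 * π), q α ^ 2 * Real.cos (2 * α) with hB
  set C := ∫ α in (0:ℝ)..(2 * π), q α ^ 2 * Real.sin (2 * α) with hC
  have hI1 : IntervalIntegrable (fun α => q α ^ 2) volume 0 (2 * π) :=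
    (hq.pow 2).intervalIntegrable _ _
  have hI2 : IntervalIntegrable (fun α => q α ^ 2 * Real.cos (2 * α)) volume 0 (2 * π) :=
    ((hq.pow 2).mul (Real.continuous_cos.comp (by continuity))).intervalIntegrable _ _
  have hI3 : IntervalIntegrable (fun α => q α ^ 2 * Real.sin (2 * α)) volume 0 (2 * π) :=
    ((hq.pow 2).mul (Real.continuous_sin.comp (by continuity))).intervalIntegrable _ _
  have hom : ∀ α₁ α₂, (om (deriv γ α₁) (deriv γ α₂)) ^ 2
      = q α₁ ^ 2 / 2 * q α₂ ^ 2
        - (q α₁ ^ 2 * Real.cos (2 * α₁)) / 2 * (q α₂ ^ 2 * Real.cos (2 * α₂))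
        - (q α₁ ^ 2 * Real.sin (2 * α₁)) / 2 * (q α₂ ^ 2 * Real.sin (2 * α₂)) := by
    intro α₁ α₂
    rw [hder, hder]
    simp only [om]
    rw [Real.cos_two_mul, Real.cos_two_mul, Real.sin_two_mul, Real.sin_two_mul]
    have h1 := Real.sin_sq_add_cos_sq α₁
    have h2 := Real.sin_sq_add_cos_sq α₂
    linear_combination (q α₁ ^ 2 * q α₂ ^ 2 * Real.cos α₁ ^ 2) * h2
      + (q α₁ ^ 2 * q α₂ ^ 2 * Real.cos α₂ ^ 2) * h1
  have hinner : ∀ α₁, (∫ α₂ in (0:ℝ)..(2 * π), (om (deriv γ α₁) (deriv γ α₂)) ^ 2)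
      = q α₁ ^ 2 / 2 * A - (q α₁ ^ 2 * Real.cos (2 * α₁)) / 2 * B
        - (q α₁ ^ 2 * Real.sin (2 * α₁)) / 2 * C := by
    intro α₁
    have heq : (fun α₂ => (om (deriv γ α₁) (deriv γ α₂)) ^ 2)
        = fun α₂ => q α₁ ^ 2 / 2 * q α₂ ^ 2
            - (q α₁ ^ 2 * Real.cos (2 * α₁)) / 2 * (q α₂ ^ 2 * Real.cos (2 * α₂))
            - (q α₁ ^ 2 * Real.sin (2 * α₁)) / 2 * (q α₂ ^ 2 * Real.sin (2 * α₂)) :=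
      funext fun α₂ => hom α₁ α₂
    rw [heq, intervalIntegral.integral_sub ((hI1.const_mul _).sub (hI2.const_mul _))
        (hI3.const_mul _),
      intervalIntegral.integral_sub (hI1.const_mul _) (hI2.const_mul _),
      intervalIntegral.integral_const_mul, intervalIntegral.integral_const_mul,
      intervalIntegral.integral_const_mul]
  simp only [hinner]
  have heq2 : (fun α₁ => q α₁ ^ 2 / 2 * A - q α₁ ^ 2 * Real.cos (2 * α₁) / 2 * B
        - q α₁ ^ 2 * Real.sin (2 * α₁) / 2 * C)
      = fun α₁ => A / 2 * q α₁ ^ 2 - B / 2 * (q α₁ ^ 2 * Real.cos (2 * α₁))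
        - C / 2 * (q α₁ ^ 2 * Real.sin (2 * α₁)) := funext fun α₁ => by ring
  rw [heq2, intervalIntegral.integral_sub ((hI1.const_mul _).sub (hI2.const_mul _))
      (hI3.const_mul _),
    intervalIntegral.integral_sub (hI1.const_mul _) (hI2.const_mul _),
    intervalIntegral.integral_const_mul, intervalIntegral.integral_const_mul,
    intervalIntegral.integral_const_mul, ← hA, ← hB, ← hC]
  ring

theorem integral_L12_sq_support_function
    (p : ℝ → ℝ) (hp : ContDiff ℝ (⊤ : ℕ∞) p) (hper : ∀ α, p (α + 2 * π) = p α)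
    (γ : ℝ → ℝ × ℝ)
    (hγ : ∀ α, γ α = deriv p α • eVec α - p α • Jrot (eVec α)) :
    2 * ∫ α₁ in (0:ℝ)..(2 * π), ∫ α₂ in (0:ℝ)..(2 * π),
        (om (deriv γ α₁) (deriv γ α₂)) ^ 2
      = (∫ α in (0:ℝ)..(2 * π), (deriv (deriv p) α + p α) ^ 2) ^ 2
        - (∫ α in (0:ℝ)..(2 * π),
            (deriv (deriv p) α + p α) ^ 2 * Real.cos (2 * α)) ^ 2
        - (∫ α in (0:ℝ)..(2 * π),
            (deriv (deriv p) α + p α) ^ 2 * Real.sin (2 * α)) ^ 2 := by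
  have hpI : ContDiff ℝ (⊤ : ℕ∞) p := hp.of_le (by simp)
  have hp1 : ContDiff ℝ (⊤ : ℕ∞) (deriv p) := (contDiff_infty_iff_deriv.mp hpI).2
  have hp2c : Continuous (deriv (deriv p)) := (contDiff_infty_iff_deriv.mp hp1).2.continuous
  set q : ℝ → ℝ := fun α => deriv (deriv p) α + p α with hqdef
  have hq : Continuous q := hp2c.add hpI.continuous
  have hder : ∀ α, deriv γ α = (-(q α * Real.sin α), q α * Real.cos α) := by
    intro α
    have hγ' : γ = fun β => (p β * Real.cos β - deriv p β * Real.sin β,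
        deriv p β * Real.cos β + p β * Real.sin β) := by
      funext β
      rw [hγ β]
      simp only [eVec, Jrot, Prod.smul_mk, smul_eq_mul, Prod.mk_sub_mk, Prod.mk.injEq]
      constructor <;> ring
    have hdp : HasDerivAt p (deriv p α) α :=
      ((hpI.differentiable (by simp)) α).hasDerivAt
    have hdp2 : HasDerivAt (deriv p) (deriv (deriv p) α) α :=
      ((hp1.differentiable (by simp)) α).hasDerivAt
    have h1 : HasDerivAt (fun β => p β * Real.cos β - deriv p β * Real.sin β)
        (-(q α * Real.sin α)) α := by
      have : HasDerivAt (fun β => p β * Real.cos β - deriv p β * Real.sin β) _ α :=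
        (hdp.mul (Real.hasDerivAt_cos α)).sub (hdp2.mul (Real.hasDerivAt_sin α))
      convert this using 1
      simp only [q]; ring
    have h2 : HasDerivAt (fun β => deriv p β * Real.cos β + p β * Real.sin β)
        (q α * Real.cos α) α := by
      have : HasDerivAt (fun β => deriv p β * Real.cos β + p β * Real.sin β) _ α :=
        (hdp2.mul (Real.hasDerivAt_cos α)).add (hdp.mul (Real.hasDerivAt_sin α))
      convert this using 1
      simp only [q]; ring
    rw [hγ']
    exact ((h1.prodMk h2).deriv)
  exact aux_integral q hq γ hder
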